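/- arXiv:2002.07562 — 3 statements merged into one kernel-verified Lean document; each statement's English description precedes it below -/
import Mathlib

section
/- For every regular expression r and every word w = a₁…aₙ ∈ Σ*, w ∈ L(r) if and only if there exist regular expressions r₀ = r, r₁, …, rₙ with rᵢ₋₁ —aᵢ→ rᵢ for each 1 ≤ i ≤ n and rₙ√. -/
open RegularExpression

/-- The acceptance predicate √ on regular expressions. -/
inductive Surd {α : Type} : RegularExpression α → Prop
  | eps : Surd 1
  | star (r : RegularExpression α) : Surd (RegularExpression.star r)
  | plusL {r₁ r₂ : RegularExpression α} : Surd r₁ → Surd (r₁ + r₂)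
  | plusR {r₁ r₂ : RegularExpression α} : Surd r₂ → Surd (r₁ + r₂)
  | comp {r₁ r₂ : RegularExpression α} : Surd r₁ → Surd r₂ → Surd (r₁ * r₂)

/-- The SOS transition relation r —a→ r'. -/
inductive Deriv {α : Type} : RegularExpression α → α → RegularExpression α → Prop
  | char (a : α) : Deriv (RegularExpression.char a) a 1
  | plusL {r₁ r₂ r₁' : RegularExpression α} {a : α} :
      Deriv r₁ a r₁' → Deriv (r₁ + r₂) a r₁'
  | plusR {r₁ r₂ r₂' : RegularExpression α} {a : α} :
      Deriv r₂ a r₂' → Deriv (r₁ + r₂) a r₂'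
  | compL {r₁ r₂ r₁' : RegularExpression α} {a : α} :
      Deriv r₁ a r₁' → Deriv (r₁ * r₂) a (r₁' * r₂)
  | compR {r₁ r₂ r₂' : RegularExpression α} {a : α} :
      Surd r₁ → Deriv r₂ a r₂' → Deriv (r₁ * r₂) a r₂'
  | star {r r'' : RegularExpression α} {a : α} :
      Deriv r a r'' → Deriv (RegularExpression.star r) a (r'' * RegularExpression.star r)

/-- Multi-step transitions labelled by a word. -/
inductive Derivs {α : Type} : RegularExpression α → List α → RegularExpression α → Prop
  | nil (r : RegularExpression α) : Derivs r [] r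
  | cons {r r' r'' : RegularExpression α} {a : α} {w : List α} :
      Deriv r a r' → Derivs r' w r'' → Derivs r (a :: w) r''

/-- The reachability set RS(r). -/
def RS {α : Type} (r : RegularExpression α) : Set (RegularExpression α) :=
  {r' | Relation.ReflTransGen (fun s t => ∃ a, Deriv s a t) r r'}

/-- Syntactic size of a regular expression. -/
def rsize {α : Type} : RegularExpression α → ℕ
  | RegularExpression.zero => 1
  | RegularExpression.epsilon => 1
  | RegularExpression.char _ => 1
  | RegularExpression.plus r₁ r₂ => rsize r₁ + rsize r₂ + 1
  | RegularExpression.comp r₁ r₂ => rsize r₁ + rsize r₂ + 1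
  | RegularExpression.star r => rsize r + 1

/-!
Soundness: a step `r —a→ r'` gives `a · L(r') ⊆ L(r)`, and `r√` gives `ε ∈ L(r)`.
Completeness, by induction on `r`: the words accepted by runs are closed under the language
operations, since a run of `r₂` may start in `r₁ · r₂` as soon as `r₁` has reached an accepting
expression, and a run of `r*` restarts in `r*` after each nonempty factor.
-/

section

variable {α : Type}

theorem Surd.nil_mem_matches' {r : RegularExpression α} (h : Surd r) : [] ∈ r.matches' := by
  induction h with
  | eps => rfl
  | star r => exact Language.nil_mem_kstar _
  | plusL _ ih => exact Or.inl ih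
  | plusR _ ih => exact Or.inr ih
  | comp _ _ ih₁ ih₂ => exact Language.append_mem_mul ih₁ ih₂

theorem Deriv.cons_mem_matches' {r r' : RegularExpression α} {a : α} {w : List α}
    (h : Deriv r a r') (hw : w ∈ r'.matches') : a :: w ∈ r.matches' := by
  induction h generalizing w with
  | char b => rw [show w = [] from hw]; rfl
  | plusL _ ih => exact Or.inl (ih hw)
  | plusR _ ih => exact Or.inr (ih hw)
  | compL _ ih =>
    obtain ⟨u, hu, v, hv, rfl⟩ := hw
    exact ⟨_, ih hu, v, hv, rfl⟩
  | compR hs _ ih => exact ⟨[], hs.nil_mem_matches', _, ih hw, rfl⟩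
  | star _ ih =>
    obtain ⟨u, hu, v, hv, rfl⟩ := hw
    rw [matches'_star, ← Language.one_add_self_mul_kstar_eq_kstar]
    exact Or.inr (Language.append_mem_mul (ih hu) hv)

theorem Derivs.mem_matches' {r r' : RegularExpression α} {w : List α}
    (h : Derivs r w r') (hs : Surd r') : w ∈ r.matches' := by
  induction h with
  | nil => exact hs.nil_mem_matches'
  | cons hstep _ ih => exact hstep.cons_mem_matches' (ih hs)

theorem Derivs.append {r r' r'' : RegularExpression α} {u v : List α}
    (h₁ : Derivs r u r') (h₂ : Derivs r' v r'') : Derivs r (u ++ v) r'' := by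
  induction h₁ with
  | nil => exact h₂
  | cons hstep _ ih => exact .cons hstep (ih h₂)

theorem Derivs.mul_right {r r' : RegularExpression α} {w : List α}
    (h : Derivs r w r') (s : RegularExpression α) : Derivs (r * s) w (r' * s) := by
  induction h with
  | nil => exact .nil _
  | cons hstep _ ih => exact .cons hstep.compL ih

def Accepts (r : RegularExpression α) (w : List α) : Prop :=
  ∃ r', Derivs r w r' ∧ Surd r'

theorem Accepts.of_derivs {r s : RegularExpression α} {u v : List α}
    (h : Derivs r u s) (hs : Accepts s v) : Accepts r (u ++ v) :=
  let ⟨t, ht, ht'⟩ := hs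
  ⟨t, h.append ht, ht'⟩

theorem Accepts.of_simulates {r s : RegularExpression α} {w : List α}
    (hsurd : Surd r → Surd s) (hstep : ∀ a r', Deriv r a r' → Deriv s a r')
    (h : Accepts r w) : Accepts s w := by
  obtain ⟨t, ht, ht'⟩ := h
  cases ht with
  | nil => exact ⟨s, .nil s, hsurd ht'⟩
  | cons hfirst hrest => exact ⟨t, .cons (hstep _ _ hfirst) hrest, ht'⟩

theorem Accepts.add_left {r₁ r₂ : RegularExpression α} {w : List α} (h : Accepts r₁ w) :
    Accepts (r₁ + r₂) w :=
  h.of_simulates .plusL fun _ _ => .plusL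

theorem Accepts.add_right {r₁ r₂ : RegularExpression α} {w : List α} (h : Accepts r₂ w) :
    Accepts (r₁ + r₂) w :=
  h.of_simulates .plusR fun _ _ => .plusR

theorem Accepts.mul_of_surd {r₁ r₂ : RegularExpression α} {w : List α} (hs : Surd r₁)
    (h : Accepts r₂ w) : Accepts (r₁ * r₂) w :=
  h.of_simulates hs.comp fun _ _ => .compR hs

theorem Accepts.mul {r₁ r₂ : RegularExpression α} {u v : List α} (hu : Accepts r₁ u)
    (hv : Accepts r₂ v) : Accepts (r₁ * r₂) (u ++ v) :=
  let ⟨_, hs, hs'⟩ := hu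
  .of_derivs (hs.mul_right r₂) (hv.mul_of_surd hs')

theorem Accepts.star_append {r : RegularExpression α} {u v : List α} (hu : Accepts r u)
    (hv : Accepts r.star v) : Accepts r.star (u ++ v) := by
  obtain ⟨s, hs, hs'⟩ := hu
  cases hs with
  | nil => exact hv
  | cons hfirst hrest =>
    exact .of_derivs (.cons hfirst.star (hrest.mul_right r.star)) (hv.mul_of_surd hs')

theorem Accepts.star_flatten {r : RegularExpression α} {L : List (List α)}
    (h : ∀ u ∈ L, Accepts r u) : Accepts r.star L.flatten := by
  induction L with
  | nil => exact ⟨r.star, .nil _, .star r⟩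
  | cons u L ih =>
    exact (h u List.mem_cons_self).star_append (ih fun v hv => h v (List.mem_cons_of_mem u hv))

theorem accepts_of_mem_matches' {r : RegularExpression α} {w : List α}
    (hw : w ∈ r.matches') : Accepts r w := by
  induction r generalizing w with
  | zero => exact hw.elim
  | epsilon => exact ⟨1, by rw [show w = [] from hw]; exact .nil 1, .eps⟩
  | char a => exact ⟨1, by rw [show w = [a] from hw]; exact .cons (.char a) (.nil 1), .eps⟩
  | plus r₁ r₂ ih₁ ih₂ => exact hw.elim (fun h => (ih₁ h).add_left) (fun h => (ih₂ h).add_right)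
  | comp r₁ r₂ ih₁ ih₂ =>
    obtain ⟨u, hu, v, hv, rfl⟩ := hw
    exact (ih₁ hu).mul (ih₂ hv)
  | star r ih =>
    obtain ⟨L, rfl, hL⟩ := Language.mem_kstar.mp hw
    exact Accepts.star_flatten fun u hu => ih (hL u hu)

end

theorem mem_iff_derivs_surd {α : Type} (r : RegularExpression α) (w : List α) :
    w ∈ r.matches' ↔ ∃ r', Derivs r w r' ∧ Surd r' :=
  ⟨accepts_of_mem_matches', fun ⟨_, h, hs⟩ => h.mem_matches' hs⟩
end

section
/- For a regular expression r', the reachability set of (r')* satisfies RS((r')*) ⊆ { (r')* } ∪ { r''·(r')* : r'' ∈ RS(r') }. -/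
open RegularExpression

/-! The right-hand side is closed under transitions: a step out of `(r')*`, or out of an
`r''·(r')*` whose `r''` is accepting, starts a new iteration `r'''·(r')*` with `r' —a→ r'''`;
any other step from `r''·(r')*` only advances `r''` inside `RS r'`. -/

theorem deriv_star_iff {α : Type} {r t : RegularExpression α} {a : α} :
    Deriv (star r) a t ↔ ∃ r'', Deriv r a r'' ∧ t = r'' * star r := by
  constructor
  · rintro (_ | _ | _ | _ | _ | h)
    exact ⟨_, h, rfl⟩
  · rintro ⟨r'', h, rfl⟩
    exact .star h

theorem deriv_mul_iff {α : Type} {r₁ r₂ t : RegularExpression α} {a : α} :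
    Deriv (r₁ * r₂) a t ↔ (∃ r₁', Deriv r₁ a r₁' ∧ t = r₁' * r₂) ∨ (Surd r₁ ∧ Deriv r₂ a t) := by
  constructor
  · rintro (_ | _ | _ | h₁ | ⟨hsurd, h₂⟩)
    · exact .inl ⟨_, h₁, rfl⟩
    · exact .inr ⟨hsurd, h₂⟩
  · rintro (⟨r₁', h₁, rfl⟩ | ⟨hsurd, h₂⟩)
    · exact .compL h₁
    · exact .compR hsurd h₂

theorem mem_RS_self {α : Type} (r : RegularExpression α) : r ∈ RS r :=
  Relation.ReflTransGen.refl

theorem mem_RS_of_deriv {α : Type} {r s t : RegularExpression α} {a : α}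
    (hs : s ∈ RS r) (h : Deriv s a t) : t ∈ RS r :=
  Relation.ReflTransGen.tail hs ⟨a, h⟩

theorem RS_star_subset {α : Type} (r' : RegularExpression α) :
    RS (RegularExpression.star r') ⊆
      insert (RegularExpression.star r')
        {s | ∃ r'' ∈ RS r', s = r'' * RegularExpression.star r'} := by
  have star_step {t a} (h : Deriv (star r') a t) : ∃ r'' ∈ RS r', t = r'' * star r' := by
    obtain ⟨r'', hr', rfl⟩ := deriv_star_iff.mp h
    exact ⟨r'', mem_RS_of_deriv (mem_RS_self r') hr', rfl⟩
  intro s hs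
  induction hs with
  | refl => exact Set.mem_insert _ _
  | tail _ hstep ih =>
    obtain ⟨a, h⟩ := hstep
    rcases ih with rfl | ⟨r'', hr'', rfl⟩
    · exact .inr (star_step h)
    · rcases deriv_mul_iff.mp h with ⟨r''', h', rfl⟩ | ⟨-, h'⟩
      · exact .inr ⟨r''', mem_RS_of_deriv hr'' h', rfl⟩
      · exact .inr (star_step h')
end

section
/- For every regular expression r and symbol a ∈ Σ, the Brzozowski derivative of L(r) with respect to a equals the union over all SOS transitions r —a→ r' of L(r'): { w : a·w ∈ L(r) } = ⋃ { L(r') : r —a→ r' }. -/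
open RegularExpression

/-! By induction on `r`: the transition rules mirror how the first letter of a word is consumed.
In `r₁ * r₂` it comes from `r₁`, or from `r₂` when `r₁` accepts the empty word (which is
what `√` detects); in `s*` it comes from the first nonempty iterate, the rest of which is
followed by a word of `s*` again. -/

open Computability

namespace Language

variable {α : Type*} {l m : Language α} {a : α} {w : List α}

theorem cons_mem_mul_iff :
    a :: w ∈ l * m ↔
      (∃ u v, a :: u ∈ l ∧ v ∈ m ∧ u ++ v = w) ∨ ([] ∈ l ∧ a :: w ∈ m) := by
  simp only [mem_mul]
  constructor
  · rintro ⟨_ | ⟨b, u⟩, hu, v, hv, huv⟩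
    · exact .inr ⟨hu, huv ▸ hv⟩
    · obtain ⟨rfl, rfl⟩ := List.cons_eq_cons.mp huv
      exact .inl ⟨u, v, hu, hv, rfl⟩
  · rintro (⟨u, v, hu, hv, rfl⟩ | ⟨hl, hm⟩)
    · exact ⟨a :: u, hu, v, hv, rfl⟩
    · exact ⟨[], hl, a :: w, hm, rfl⟩

theorem cons_mem_kstar_iff :
    a :: w ∈ l∗ ↔ ∃ u v, a :: u ∈ l ∧ v ∈ l∗ ∧ u ++ v = w := by
  constructor
  · rw [mem_kstar_iff_exists_nonempty]
    rintro ⟨_ | ⟨_ | ⟨b, u⟩, S⟩, hS, hl⟩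
    · simp at hS
    · exact absurd rfl (hl [] List.mem_cons_self).2
    · obtain ⟨rfl, rfl⟩ := List.cons_eq_cons.mp hS.symm
      refine ⟨u, S.flatten, (hl _ List.mem_cons_self).1, ?_, rfl⟩
      exact join_mem_kstar fun y hy => (hl y (List.mem_cons_of_mem _ hy)).1
  · rintro ⟨u, v, hu, hv, rfl⟩
    rw [← one_add_self_mul_kstar_eq_kstar]
    exact .inr (append_mem_mul hu hv)

end Language

open Language

section

variable {α : Type}

theorem surd_iff_nil_mem_matches' (r : RegularExpression α) : Surd r ↔ [] ∈ r.matches' := by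
  induction r with
  | zero => exact ⟨nofun, nofun⟩
  | epsilon => exact ⟨fun _ => nil_mem_one, fun _ => .eps⟩
  | char b => exact ⟨nofun, fun h => nomatch (Set.mem_singleton_iff.mp h)⟩
  | plus r₁ r₂ ih₁ ih₂ =>
    rw [plus_def, matches'_add, mem_add, ← ih₁, ← ih₂]
    exact ⟨fun | .plusL h => .inl h | .plusR h => .inr h,
      fun | .inl h => .plusL h | .inr h => .plusR h⟩
  | comp r₁ r₂ ih₁ ih₂ =>
    rw [comp_def, matches'_mul, mem_mul]
    constructor
    · rintro (_ | _ | _ | _ | ⟨h₁, h₂⟩)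
      exact ⟨[], ih₁.mp h₁, [], ih₂.mp h₂, rfl⟩
    · rintro ⟨u, hu, v, hv, huv⟩
      obtain ⟨rfl, rfl⟩ := List.append_eq_nil_iff.mp huv
      exact .comp (ih₁.mpr hu) (ih₂.mpr hv)
  | star r => exact ⟨fun _ => nil_mem_kstar _, fun _ => .star r⟩

theorem cons_mem_matches'_iff_exists_deriv (r : RegularExpression α) (a : α) (w : List α) :
    a :: w ∈ r.matches' ↔ ∃ r', Deriv r a r' ∧ w ∈ r'.matches' := by
  induction r generalizing w with
  | zero => exact ⟨nofun, fun ⟨_, h, _⟩ => nomatch h⟩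
  | epsilon => exact ⟨fun h => (nomatch (mem_one _).mp h), fun ⟨_, h, _⟩ => nomatch h⟩
  | char b =>
    rw [matches'_char]
    change a :: w = [b] ↔ _
    rw [List.cons_eq_cons]
    constructor
    · rintro ⟨rfl, rfl⟩
      exact ⟨1, .char a, nil_mem_one⟩
    · rintro ⟨_, ⟨⟩, hw⟩
      exact ⟨rfl, (mem_one w).mp hw⟩
  | plus r₁ r₂ ih₁ ih₂ =>
    rw [plus_def, matches'_add, mem_add, ih₁, ih₂]
    constructor
    · rintro (⟨r', hd, hw⟩ | ⟨r', hd, hw⟩)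
      exacts [⟨r', .plusL hd, hw⟩, ⟨r', .plusR hd, hw⟩]
    · rintro ⟨r', hd, hw⟩
      cases hd with
      | plusL hd => exact .inl ⟨r', hd, hw⟩
      | plusR hd => exact .inr ⟨r', hd, hw⟩
  | comp r₁ r₂ ih₁ ih₂ =>
    rw [comp_def, matches'_mul, cons_mem_mul_iff]
    constructor
    · rintro (⟨u, v, hu, hv, rfl⟩ | ⟨hs, hw⟩)
      · obtain ⟨r', hd, hu⟩ := (ih₁ u).mp hu
        exact ⟨r' * r₂, .compL hd, by rw [matches'_mul]; exact append_mem_mul hu hv⟩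
      · obtain ⟨r', hd, hw⟩ := (ih₂ w).mp hw
        exact ⟨r', .compR ((surd_iff_nil_mem_matches' r₁).mpr hs) hd, hw⟩
    · rintro ⟨_, hd, hw⟩
      cases hd with
      | compL hd =>
        rw [matches'_mul, mem_mul] at hw
        obtain ⟨u, hu, v, hv, rfl⟩ := hw
        exact .inl ⟨u, v, (ih₁ u).mpr ⟨_, hd, hu⟩, hv, rfl⟩
      | compR hs hd =>
        exact .inr ⟨(surd_iff_nil_mem_matches' r₁).mp hs, (ih₂ w).mpr ⟨_, hd, hw⟩⟩
  | star r ih =>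
    rw [matches'_star, cons_mem_kstar_iff]
    constructor
    · rintro ⟨u, v, hu, hv, rfl⟩
      obtain ⟨r', hd, hu⟩ := (ih u).mp hu
      refine ⟨r' * r.star, .star hd, ?_⟩
      rw [matches'_mul, matches'_star]
      exact append_mem_mul hu hv
    · rintro ⟨_, hd, hw⟩
      cases hd with | star hd => ?_
      rw [matches'_mul, matches'_star, mem_mul] at hw
      obtain ⟨u, hu, v, hv, rfl⟩ := hw
      exact ⟨u, v, (ih u).mpr ⟨_, hd, hu⟩, hv, rfl⟩

end

theorem derivative_eq_union_targets {α : Type} (r : RegularExpression α) (a : α) :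
    {w : List α | (a :: w) ∈ r.matches'} =
      ⋃ r' ∈ {r' | Deriv r a r'}, (r'.matches' : Set (List α)) := by
  ext w
  simp only [Set.mem_ofPred_eq, cons_mem_matches'_iff_exists_deriv, ← exists_prop]
  exact Set.mem_iUnion₂.symm
end
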